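/- Let m ≥ 2, let λ = e^{πi/m} (a primitive 2m-th root of unity), and let i be a positive integer with gcd(i, 2m) = 1 (so i is odd). Let A = ℂ⟨u,v⟩/(u² − λ^i·v²). Let τ : A → A be the ℂ-algebra endomorphism determined by τ(u) = −u, τ(v) = −v. Let S₊, S₋ : A → A be any ℂ-linear maps satisfying, for all nonnegative integers p and all integers q ≥ 1: S₊(u^{2p}·(vu)^q) = λ^{−iq}·u^{2p+1}·(vu)^{q−1}·v, S₊(u^{2p+1}·(vu)^{q−1}·v) = λ^{iq}·u^{2p}·(vu)^q, S₊(u^{2p}) = u^{2p}, and S₋(u^{2p}·(vu)^q) = λ^{iq}·u^{2p+1}·(vu)^{q−1}·v, S₋(u^{2p+1}·(vu)^{q−1}·v) = λ^{−iq}·u^{2p}·(vu)^q, S₋(u^{2p}) = u^{2p}. Then the set { F ∈ A : τ(F) = F, S₊(F) = F, S₋(F) = F } equals the ℂ-subalgebra of A generated by u² and (uv)^m − (vu)^m. -/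

import Mathlib

/-! With `z = u²`, `w = vu`, `t = uv`, the element `z` is central, `wt = tw = C⁻¹z²`, and `A`
is spanned by the even monomials `zᵖwᑫ`, `zᵖtᑫ` and their left multiples by `u` and `v`.
A fixed element `F` is recovered by averaging operators, so no basis of `A` is needed:
`½(1 + τ)` kills the odd monomials; averaging the powers of `S₊S₋`, which scales `zᵖwᑫ`
and `zᵖtᑫ` by `m`-th roots of unity equal to `1` exactly when `m ∣ q`, keeps only `zᵖwᵐˢ`
and `zᵖtᵐˢ`; and `½(1 + S₊)` maps these onto `zᵖ((tᵐ)ˢ + (-wᵐ)ˢ)`. These are power sums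
of the commuting pair `tᵐ`, `-wᵐ`, whose product is a multiple of `z²ᵐ`, so Newton's
recurrence shows that they span `ℂ[z, tᵐ - wᵐ]`; conversely `S₊` and `S₋` fix each of them. -/

noncomputable section

open FreeAlgebra

/-- The relation `u² = C • v²` on `ℂ⟨u,v⟩`, i.e. the quotient by the two-sided
ideal generated by `u² - C·v²`. -/
inductive Stmt15.Rel (C : ℂ) : FreeAlgebra ℂ (Fin 2) → FreeAlgebra ℂ (Fin 2) → Prop
  | main : Stmt15.Rel C (ι ℂ 0 * ι ℂ 0) (C • (ι ℂ 1 * ι ℂ 1))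

/-- `A = ℂ⟨u,v⟩/(u² - C·v²)`. -/
abbrev Stmt15.A (C : ℂ) := RingQuot (Stmt15.Rel C)

def Stmt15.u (C : ℂ) : Stmt15.A C := RingQuot.mkAlgHom ℂ (Stmt15.Rel C) (ι ℂ 0)
def Stmt15.v (C : ℂ) : Stmt15.A C := RingQuot.mkAlgHom ℂ (Stmt15.Rel C) (ι ℂ 1)

open Submodule Set

section Averaging

variable {K M ι : Type*} [Field K] [AddCommGroup M] [Module K M]

theorem mem_of_apply_eq_self_of_mapsTo {P : M →ₗ[K] M} {s : Set M} {N : Submodule K M}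
    {x : M} (hx : x ∈ span K s) (hPx : P x = x) (hs : MapsTo P s N) : x ∈ N :=
  hPx ▸ (span_le.mpr hs : span K s ≤ N.comap P) hx

theorem mem_of_apply_eq_self_of_add_apply_mem [CharZero K] {f : M →ₗ[K] M} {s : Set M}
    {N : Submodule K M} {x : M} (hx : x ∈ span K s) (hfx : f x = x)
    (hs : ∀ y ∈ s, y + f y ∈ N) : x ∈ N := by
  refine mem_of_apply_eq_self_of_mapsTo (P := (2 : K)⁻¹ • (LinearMap.id + f)) hx ?_
    fun y hy => N.smul_mem _ (hs y hy)
  rw [LinearMap.smul_apply, LinearMap.add_apply, LinearMap.id_apply, hfx, ← two_smul K,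
    smul_smul, inv_mul_cancel₀ two_ne_zero, one_smul]

/-- Averaging over the powers of `T` projects onto its fixed vectors, killing the eigenvectors
whose eigenvalue is an `m`-th root of unity other than `1`. -/
theorem mem_of_apply_eq_self_of_eigen [CharZero K] {T : M →ₗ[K] M} {m : ℕ} (hm : m ≠ 0)
    {e : ι → M} {μ : ι → K} (he : ∀ j, T (e j) = μ j • e j) (hμ : ∀ j, μ j ^ m = 1)
    {N : Submodule K M} (hN : ∀ j, μ j = 1 → e j ∈ N) {x : M}
    (hx : x ∈ span K (range e)) (hTx : T x = x) : x ∈ N := by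
  set P : M →ₗ[K] M := (m : K)⁻¹ • ∑ k ∈ Finset.range m, T ^ k
  have hP : ∀ y c, T y = c • y →
      P y = ((m : K)⁻¹ * ∑ k ∈ Finset.range m, c ^ k) • y := by
    intro y c hy
    have hpow : ∀ k, (T ^ k) y = c ^ k • y := by
      intro k
      induction k with
      | zero => simp
      | succ k ih => rw [pow_succ', Module.End.mul_apply, ih, map_smul, hy, smul_smul, pow_succ]
    rw [LinearMap.smul_apply, LinearMap.sum_apply]
    simp only [hpow, ← Finset.sum_smul, smul_smul]
  refine mem_of_apply_eq_self_of_mapsTo (P := P) hx ?_ ?_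
  · rw [hP x 1 (by rw [hTx, one_smul])]
    simp [hm]
  · rintro _ ⟨j, rfl⟩
    rw [SetLike.mem_coe, hP _ _ (he j)]
    by_cases h1 : μ j = 1
    · exact N.smul_mem _ (hN j h1)
    · have hsum : ∑ k ∈ Finset.range m, μ j ^ k = 0 := by
        have := geom_sum_mul (μ j) m
        rw [hμ j, sub_self] at this
        exact (mul_eq_zero.mp this).resolve_right (sub_ne_zero.mpr h1)
      simp [hsum]

end Averaging

section LeftMultiplication

variable {R B : Type*} [CommSemiring R] [Semiring B] [Algebra R B]

theorem mul_mem_span_of_forall_mul_mem {a : B} {s : Set B} (h : ∀ y ∈ s, a * y ∈ span R s)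
    {x : B} (hx : x ∈ span R s) : a * x ∈ span R s :=
  (span_le.mpr h : span R s ≤ (span R s).comap (LinearMap.mulLeft R a)) hx

theorem adjoin_le_of_one_mem_of_mul_mem {s : Set B} {N : Submodule R B} (h1 : (1 : B) ∈ N)
    (hmul : ∀ a ∈ s, ∀ x ∈ N, a * x ∈ N) :
    Subalgebra.toSubmodule (Algebra.adjoin R s) ≤ N := by
  intro y hy
  have key : ∀ x ∈ N, y * x ∈ N := by
    induction hy using Algebra.adjoin_induction with
    | mem a ha => exact hmul a ha
    | algebraMap r =>
      intro x hx
      rw [Algebra.algebraMap_eq_smul_one, smul_mul_assoc, one_mul]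
      exact N.smul_mem r hx
    | add a b _ _ ha hb =>
      intro x hx
      rw [add_mul]
      exact N.add_mem (ha x hx) (hb x hx)
    | mul a b _ _ ha hb =>
      intro x hx
      rw [mul_assoc]
      exact ha _ (hb x hx)
  simpa using key 1 h1

end LeftMultiplication

section Monomials

variable {K B : Type*} [Field K] [Ring B] [Algebra K B] {z a b : B}

def zMonomial (z a b : B) : (ℕ × ℕ) ⊕ (ℕ × ℕ) → B :=
  Sum.elim (fun pq => z ^ pq.1 * a ^ pq.2) (fun pq => z ^ pq.1 * b ^ pq.2)

theorem range_zMonomial_comm (z a b : B) : range (zMonomial z a b) = range (zMonomial z b a) := by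
  simp only [zMonomial, Set.Sum.elim_range, Set.union_comm]

variable (K) in
theorem zMonomial_mem_span (z a b : B) (j : (ℕ × ℕ) ⊕ (ℕ × ℕ)) :
    zMonomial z a b j ∈ span K (range (zMonomial z a b)) :=
  subset_span ⟨j, rfl⟩

theorem z_mul_mem_span_zMonomial {x : B} (hx : x ∈ span K (range (zMonomial z a b))) :
    z * x ∈ span K (range (zMonomial z a b)) := by
  refine mul_mem_span_of_forall_mul_mem ?_ hx
  rintro _ ⟨⟨p, q⟩ | ⟨p, q⟩, rfl⟩
  · simpa only [zMonomial, Sum.elim_inl, ← mul_assoc, ← pow_succ'] using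
      zMonomial_mem_span K z a b (.inl (p + 1, q))
  · simpa only [zMonomial, Sum.elim_inr, ← mul_assoc, ← pow_succ'] using
      zMonomial_mem_span K z a b (.inr (p + 1, q))

theorem mul_mem_span_zMonomial {c : K} (hza : Commute z a) (hab : a * b = c • z ^ 2) {x : B}
    (hx : x ∈ span K (range (zMonomial z a b))) : a * x ∈ span K (range (zMonomial z a b)) := by
  refine mul_mem_span_of_forall_mul_mem ?_ hx
  have hcomm : ∀ p y, a * (z ^ p * y) = z ^ p * (a * y) := fun p y => by
    rw [← mul_assoc, ← (hza.pow_left p).eq, mul_assoc]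
  rintro _ ⟨⟨p, q⟩ | ⟨p, _ | q⟩, rfl⟩
  · simpa only [zMonomial, Sum.elim_inl, hcomm, ← pow_succ'] using
      zMonomial_mem_span K z a b (.inl (p, q + 1))
  · have h : a * (z ^ p * b ^ 0) = z ^ p * a ^ 1 := by
      rw [pow_zero, pow_one, mul_one, (hza.pow_left p).eq]
    simpa only [zMonomial, Sum.elim_inl, Sum.elim_inr, h] using
      zMonomial_mem_span K z a b (.inl (p, 1))
  · have h : a * (z ^ p * b ^ (q + 1)) = c • (z ^ (p + 2) * b ^ q) := by
      rw [hcomm, pow_succ', ← mul_assoc a, hab, smul_mul_assoc, mul_smul_comm, ← mul_assoc,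
        ← pow_add]
    simpa only [zMonomial, Sum.elim_inr, h] using
      smul_mem _ c (zMonomial_mem_span K z a b (.inr (p + 2, q)))

def IsTwistedSwap (z a b : B) (c : K) (S : B →ₗ[K] B) : Prop :=
  ∀ p q : ℕ, S (z ^ p * a ^ q) = c ^ q • (z ^ p * b ^ q) ∧
    S (z ^ p * b ^ q) = (c ^ q)⁻¹ • (z ^ p * a ^ q)

variable {c : K} {S : B →ₗ[K] B}

theorem IsTwistedSwap.pow (hS : IsTwistedSwap z a b c S) (m : ℕ) :
    IsTwistedSwap z (a ^ m) (b ^ m) (c ^ m) S := fun p q => by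
  simpa only [← pow_mul] using hS p (m * q)

theorem IsPrimitiveRoot.dvd_of_pow_two_mul_eq_one {ζ : K} {m q : ℕ}
    (hζ : IsPrimitiveRoot ζ (2 * m)) (h : ζ ^ (2 * q) = 1) : m ∣ q :=
  Nat.dvd_of_mul_dvd_mul_left two_pos ((hζ.pow_eq_one_iff_dvd _).mp h)

theorem IsPrimitiveRoot.pow_eq_neg_one {ζ : K} {m : ℕ} (hm : m ≠ 0)
    (hζ : IsPrimitiveRoot ζ (2 * m)) : ζ ^ m = -1 := by
  have h := hζ.pow_of_dvd hm (dvd_mul_left m 2)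
  rw [Nat.mul_div_cancel 2 (Nat.pos_of_ne_zero hm)] at h
  exact h.eq_neg_one_of_two_right

theorem IsTwistedSwap.mem_span_zMonomial_pow [CharZero K] {ζ : K} {m : ℕ} (hm : m ≠ 0)
    (hζ : IsPrimitiveRoot ζ (2 * m)) {S' : B →ₗ[K] B} (hS : IsTwistedSwap z a b ζ⁻¹ S)
    (hS' : IsTwistedSwap z a b ζ S') {x : B} (hx : x ∈ span K (range (zMonomial z a b)))
    (hSx : S (S' x) = x) : x ∈ span K (range (zMonomial z (a ^ m) (b ^ m))) := by
  refine mem_of_apply_eq_self_of_eigen (T := S ∘ₗ S') hm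
    (μ := Sum.elim (fun pq => ζ ^ (2 * pq.2)) (fun pq => ζ⁻¹ ^ (2 * pq.2))) ?_ ?_ ?_ hx hSx
  · rintro (⟨p, q⟩ | ⟨p, q⟩)
    · rw [LinearMap.comp_apply, zMonomial, Sum.elim_inl, (hS' p q).1, map_smul, (hS p q).2,
        smul_smul, inv_pow, inv_inv, ← pow_add, ← two_mul, Sum.elim_inl]
    · rw [LinearMap.comp_apply, zMonomial, Sum.elim_inr, (hS' p q).2, map_smul, (hS p q).1,
        smul_smul, ← inv_pow, ← pow_add, ← two_mul, Sum.elim_inr]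
  · have h : ∀ η : K, IsPrimitiveRoot η (2 * m) → ∀ q, (η ^ (2 * q)) ^ m = 1 :=
      fun η hη q => by rw [← pow_mul, mul_right_comm, pow_mul, hη.pow_eq_one, one_pow]
    rintro (⟨p, q⟩ | ⟨p, q⟩)
    · exact h ζ hζ q
    · exact h ζ⁻¹ hζ.inv q
  · rintro (⟨p, q⟩ | ⟨p, q⟩) h1
    · obtain ⟨s, rfl⟩ := hζ.dvd_of_pow_two_mul_eq_one h1
      simpa only [zMonomial, Sum.elim_inl, pow_mul] using
        zMonomial_mem_span K z (a ^ m) (b ^ m) (.inl (p, s))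
    · obtain ⟨s, rfl⟩ := hζ.inv.dvd_of_pow_two_mul_eq_one h1
      simpa only [zMonomial, Sum.elim_inr, pow_mul] using
        zMonomial_mem_span K z (a ^ m) (b ^ m) (.inr (p, s))

end Monomials

section PowerSums

variable {K B : Type*} [Field K] [Ring B] [Algebra K B] {z a b : B}

variable (K) in
def powSumSpan (z a b : B) : Submodule K B :=
  span K (range fun ps : ℕ × ℕ => z ^ ps.1 * (a ^ ps.2 + b ^ ps.2))

variable (K) in
theorem mul_pow_add_pow_mem_powSumSpan (z a b : B) (p s : ℕ) :
    z ^ p * (a ^ s + b ^ s) ∈ powSumSpan K z a b :=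
  subset_span ⟨(p, s), rfl⟩

theorem Commute.add_mul_pow_add_pow (h : Commute a b) (n : ℕ) :
    (a + b) * (a ^ (n + 1) + b ^ (n + 1)) =
      a ^ (n + 2) + b ^ (n + 2) + a * b * (a ^ n + b ^ n) := by
  have hba : b * a ^ (n + 1) = a * b * a ^ n := by rw [pow_succ', ← mul_assoc, h.eq]
  rw [add_mul, mul_add, mul_add, mul_add, hba, mul_assoc a b (b ^ n), ← pow_succ' b n,
    ← pow_succ' a (n + 1), ← pow_succ' b (n + 1)]
  abel

theorem powSumSpan_le_adjoin (hab : Commute a b) {c : K} {k : ℕ} (habz : a * b = c • z ^ k) :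
    powSumSpan K z a b ≤ Subalgebra.toSubmodule (Algebra.adjoin K {z, a + b}) := by
  set S := Algebra.adjoin K {z, a + b}
  have hz : z ∈ S := Algebra.subset_adjoin (by simp)
  have hs : a + b ∈ S := Algebra.subset_adjoin (by simp)
  have hpow : ∀ n, a ^ n + b ^ n ∈ S := by
    intro n
    induction n using Nat.twoStepInduction with
    | zero => simpa using S.add_mem S.one_mem S.one_mem
    | one => simpa using hs
    | more n ih0 ih1 =>
      rw [eq_sub_of_add_eq (hab.add_mul_pow_add_pow n).symm, habz]
      exact S.sub_mem (S.mul_mem hs ih1) (S.mul_mem (S.smul_mem (S.pow_mem hz k) c) ih0)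
  rw [powSumSpan, span_le]
  rintro _ ⟨⟨p, s⟩, rfl⟩
  exact S.mul_mem (S.pow_mem hz p) (hpow s)

theorem adjoin_le_powSumSpan [CharZero K] (hza : Commute z a) (hzb : Commute z b)
    (hab : Commute a b) {c : K} {k : ℕ} (habz : a * b = c • z ^ k) :
    Subalgebra.toSubmodule (Algebra.adjoin K {z, a + b}) ≤ powSumSpan K z a b := by
  have hgen := mul_pow_add_pow_mem_powSumSpan K z a b
  refine adjoin_le_of_one_mem_of_mul_mem ?_ ?_
  · have h : (1 : B) = (2 : K)⁻¹ • (z ^ 0 * (a ^ 0 + b ^ 0)) := by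
      rw [pow_zero, pow_zero, pow_zero, one_mul, ← two_smul K, smul_smul,
        inv_mul_cancel₀ two_ne_zero, one_smul]
    rw [h]
    exact smul_mem _ _ (hgen 0 0)
  rintro y (rfl | rfl) x hx
  · refine mul_mem_span_of_forall_mul_mem ?_ hx
    rintro _ ⟨⟨p, s⟩, rfl⟩
    rw [← mul_assoc, ← pow_succ']
    exact hgen _ _
  · refine mul_mem_span_of_forall_mul_mem ?_ hx
    have hcomm : ∀ p y, (a + b) * (z ^ p * y) = z ^ p * ((a + b) * y) := fun p y => by
      rw [← mul_assoc, ← ((hza.add_right hzb).pow_left p).eq, mul_assoc]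
    rintro _ ⟨⟨p, _ | n⟩, rfl⟩
    · have h : (a + b) * (z ^ p * (a ^ 0 + b ^ 0)) = (2 : K) • (z ^ p * (a ^ 1 + b ^ 1)) := by
        rw [hcomm, pow_zero, pow_zero, pow_one, pow_one, mul_add, mul_one, ← two_smul K,
          mul_smul_comm]
      rw [h]
      exact smul_mem _ _ (hgen p 1)
    · have h : (a + b) * (z ^ p * (a ^ (n + 1) + b ^ (n + 1))) =
          z ^ p * (a ^ (n + 2) + b ^ (n + 2)) + c • (z ^ (p + k) * (a ^ n + b ^ n)) := by
        rw [hcomm, hab.add_mul_pow_add_pow, habz, mul_add, smul_mul_assoc, mul_smul_comm,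
          ← mul_assoc, ← pow_add]
      rw [h]
      exact add_mem (hgen _ _) (smul_mem _ _ (hgen _ _))

theorem mul_pow_add_neg_one_smul_pow (z a b : B) (p q : ℕ) :
    z ^ p * (b ^ q + ((-1 : K) • a) ^ q) = z ^ p * b ^ q + (-1 : K) ^ q • (z ^ p * a ^ q) := by
  rw [smul_pow, mul_add, mul_smul_comm]

variable {S : B →ₗ[K] B}

theorem IsTwistedSwap.apply_eq_self_of_mem_powSumSpan (hS : IsTwistedSwap z a b (-1 : K) S)
    {x : B} (hx : x ∈ powSumSpan K z b ((-1 : K) • a)) : S x = x := by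
  suffices h : powSumSpan K z b ((-1 : K) • a) ≤ LinearMap.eqLocus S LinearMap.id from h hx
  rw [powSumSpan, span_le]
  rintro _ ⟨⟨p, q⟩, rfl⟩
  dsimp only
  rw [SetLike.mem_coe, LinearMap.mem_eqLocus, LinearMap.id_apply,
    mul_pow_add_neg_one_smul_pow, map_add, map_smul, (hS p q).1, (hS p q).2, smul_smul,
    ← mul_pow, ← inv_pow, inv_neg, inv_one]
  simp [add_comm]

theorem IsTwistedSwap.mem_powSumSpan_of_apply_eq_self [CharZero K]
    (hS : IsTwistedSwap z a b (-1 : K) S) {x : B} (hx : x ∈ span K (range (zMonomial z a b)))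
    (hSx : S x = x) : x ∈ powSumSpan K z b ((-1 : K) • a) := by
  refine mem_of_apply_eq_self_of_add_apply_mem hx hSx ?_
  have hgen := mul_pow_add_pow_mem_powSumSpan K z b ((-1 : K) • a)
  rintro _ ⟨⟨p, q⟩ | ⟨p, q⟩, rfl⟩
  · have h : z ^ p * a ^ q + S (z ^ p * a ^ q) =
        (-1 : K) ^ q • (z ^ p * (b ^ q + ((-1 : K) • a) ^ q)) := by
      rw [(hS p q).1, mul_pow_add_neg_one_smul_pow, smul_add, smul_smul, ← mul_pow]
      simp [add_comm]
    rw [zMonomial, Sum.elim_inl, h]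
    exact smul_mem _ _ (hgen p q)
  · have h : z ^ p * b ^ q + S (z ^ p * b ^ q) = z ^ p * (b ^ q + ((-1 : K) • a) ^ q) := by
      rw [(hS p q).2, mul_pow_add_neg_one_smul_pow, ← inv_pow, inv_neg, inv_one]
    rw [zMonomial, Sum.elim_inr, h]
    exact hgen p q

end PowerSums

namespace Stmt15

variable {C : ℂ}

variable (C) in
def z : A C := u C ^ 2

variable (C) in
def w : A C := v C * u C

variable (C) in
def t : A C := u C * v C

theorem u_mul_u : u C * u C = C • (v C * v C) := by
  simpa [u, v, map_mul, map_smul] using RingQuot.mkAlgHom_rel ℂ (Rel.main (C := C))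

theorem v_mul_v (hC : C ≠ 0) : v C * v C = C⁻¹ • z C := by
  rw [z, sq, u_mul_u, smul_smul, inv_mul_cancel₀ hC, one_smul]

theorem commute_z_u : Commute (z C) (u C) := (Commute.refl _).pow_left 2

theorem commute_z_v : Commute (z C) (v C) := by
  rw [Commute, SemiconjBy, z, sq, u_mul_u, smul_mul_assoc, mul_smul_comm, mul_assoc]

theorem commute_z_w : Commute (z C) (w C) := commute_z_v.mul_right commute_z_u

theorem commute_z_t : Commute (z C) (t C) := commute_z_u.mul_right commute_z_v

theorem w_mul_t (hC : C ≠ 0) : w C * t C = C⁻¹ • z C ^ 2 := by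
  calc w C * t C = v C * z C * v C := by simp only [w, t, z, sq, mul_assoc]
    _ = z C * (v C * v C) := by rw [← commute_z_v.eq, mul_assoc]
    _ = C⁻¹ • z C ^ 2 := by rw [v_mul_v hC, mul_smul_comm, sq]

theorem t_mul_w (hC : C ≠ 0) : t C * w C = C⁻¹ • z C ^ 2 := by
  calc t C * w C = u C * (v C * v C) * u C := by simp only [w, t, mul_assoc]
    _ = C⁻¹ • (u C * z C * u C) := by rw [v_mul_v hC, mul_smul_comm, smul_mul_assoc]
    _ = C⁻¹ • z C ^ 2 := by rw [← commute_z_u.eq, mul_assoc, sq (z C), z, sq (u C)]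

theorem commute_w_t (hC : C ≠ 0) : Commute (w C) (t C) := (w_mul_t hC).trans (t_mul_w hC).symm

theorem adjoin_u_v : Algebra.adjoin ℂ {u C, v C} = ⊤ := by
  have h : ({u C, v C} : Set (A C)) = RingQuot.mkAlgHom ℂ (Rel C) '' range (ι ℂ) := by
    ext x
    simp [Fin.exists_fin_two, u, v, eq_comm]
  rw [h, Algebra.adjoin_image, FreeAlgebra.adjoin_range_ι, Algebra.map_top,
    AlgHom.range_eq_top]
  exact RingQuot.mkAlgHom_surjective ℂ (Rel C)

variable (C) in
def evenSpan : Submodule ℂ (A C) := span ℂ (range (zMonomial (z C) (w C) (t C)))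

theorem one_mem_evenSpan : (1 : A C) ∈ evenSpan C := by
  have h : zMonomial (z C) (w C) (t C) (.inl (0, 0)) = 1 := by simp [zMonomial]
  exact h ▸ zMonomial_mem_span ℂ (z C) (w C) (t C) (.inl (0, 0))

theorem z_mul_mem_evenSpan {x : A C} (hx : x ∈ evenSpan C) : z C * x ∈ evenSpan C :=
  z_mul_mem_span_zMonomial hx

theorem w_mul_mem_evenSpan (hC : C ≠ 0) {x : A C} (hx : x ∈ evenSpan C) :
    w C * x ∈ evenSpan C :=
  mul_mem_span_zMonomial commute_z_w (w_mul_t hC) hx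

theorem t_mul_mem_evenSpan (hC : C ≠ 0) {x : A C} (hx : x ∈ evenSpan C) :
    t C * x ∈ evenSpan C := by
  rw [evenSpan, range_zMonomial_comm] at hx ⊢
  exact mul_mem_span_zMonomial commute_z_t (t_mul_w hC) hx

theorem span_evenSpan_union_odd_eq_top (hC : C ≠ 0) :
    span ℂ ((evenSpan C : Set (A C)) ∪ (u C * ·) '' evenSpan C ∪ (v C * ·) '' evenSpan C) =
      ⊤ := by
  rw [eq_top_iff, ← Algebra.top_toSubmodule, ← adjoin_u_v]
  refine adjoin_le_of_one_mem_of_mul_mem (subset_span (Or.inl (Or.inl one_mem_evenSpan))) ?_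
  rintro _ (rfl | rfl) x hx <;> refine mul_mem_span_of_forall_mul_mem ?_ hx <;>
    rintro y ((hy | ⟨e, he, rfl⟩) | ⟨e, he, rfl⟩)
  · exact subset_span (Or.inl (Or.inr ⟨y, hy, rfl⟩))
  · rw [← mul_assoc, ← sq]
    exact subset_span (Or.inl (Or.inl (z_mul_mem_evenSpan he)))
  · rw [← mul_assoc]
    exact subset_span (Or.inl (Or.inl (t_mul_mem_evenSpan hC he)))
  · exact subset_span (Or.inr ⟨y, hy, rfl⟩)
  · rw [← mul_assoc]
    exact subset_span (Or.inl (Or.inl (w_mul_mem_evenSpan hC he)))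
  · rw [← mul_assoc, v_mul_v hC, smul_mul_assoc]
    exact subset_span (Or.inl (Or.inl (smul_mem _ _ (z_mul_mem_evenSpan he))))

theorem adjoin_z_w_t_le_equalizer {τ : A C →ₐ[ℂ] A C} (hτu : τ (u C) = -u C)
    (hτv : τ (v C) = -v C) :
    Algebra.adjoin ℂ {z C, w C, t C} ≤ AlgHom.equalizer τ (AlgHom.id ℂ (A C)) :=
  Algebra.adjoin_le <| by
    rintro _ (rfl | rfl | rfl) <;> rw [SetLike.mem_coe, AlgHom.mem_equalizer, AlgHom.id_apply]
    · rw [z, map_pow, hτu, neg_sq (u C)]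
    · rw [w, map_mul, hτu, hτv, neg_mul_neg (v C) (u C)]
    · rw [t, map_mul, hτu, hτv, neg_mul_neg (u C) (v C)]

theorem mem_evenSpan_of_apply_eq_self {τ : A C →ₐ[ℂ] A C} (hτu : τ (u C) = -u C)
    (hτv : τ (v C) = -v C) (hC : C ≠ 0) {F : A C} (hF : τ F = F) : F ∈ evenSpan C := by
  have hτE : ∀ x ∈ evenSpan C, τ x = x := by
    suffices h : evenSpan C ≤ Subalgebra.toSubmodule (Algebra.adjoin ℂ {z C, w C, t C}) from
      fun x hx => adjoin_z_w_t_le_equalizer hτu hτv (h hx)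
    rw [evenSpan, span_le]
    have hmem : ∀ y ∈ ({z C, w C, t C} : Set (A C)), y ∈ Algebra.adjoin ℂ {z C, w C, t C} :=
      fun y hy => Algebra.subset_adjoin hy
    rintro _ ⟨⟨p, q⟩ | ⟨p, q⟩, rfl⟩ <;>
      exact Subalgebra.mul_mem _ (Subalgebra.pow_mem _ (hmem _ (by simp)) p)
        (Subalgebra.pow_mem _ (hmem _ (by simp)) q)
  refine mem_of_apply_eq_self_of_add_apply_mem (f := τ.toLinearMap)
    ((span_evenSpan_union_odd_eq_top hC).symm ▸ mem_top) hF ?_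
  rintro y ((hy | ⟨e, he, rfl⟩) | ⟨e, he, rfl⟩)
  · rw [AlgHom.toLinearMap_apply, hτE y hy, ← two_smul ℂ]
    exact smul_mem _ _ hy
  · simp [hτu, hτE e he, neg_mul (u C) e]
  · simp [hτv, hτE e he, neg_mul (v C) e]

theorem powSumSpan_eq_adjoin (hC : C ≠ 0) (m : ℕ) :
    powSumSpan ℂ (z C) (t C ^ m) ((-1 : ℂ) • w C ^ m) =
      Subalgebra.toSubmodule (Algebra.adjoin ℂ {z C, t C ^ m - w C ^ m}) := by
  have htw := (commute_w_t hC).symm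
  have hab : Commute (t C ^ m) ((-1 : ℂ) • w C ^ m) := (htw.pow_pow m m).smul_right (-1)
  have habz : t C ^ m * ((-1 : ℂ) • w C ^ m) = (-(C⁻¹ ^ m)) • z C ^ (2 * m) := by
    rw [mul_smul_comm, ← htw.mul_pow, t_mul_w hC, smul_pow, ← pow_mul, smul_smul, neg_one_mul]
  have hsub : t C ^ m - w C ^ m = t C ^ m + (-1 : ℂ) • w C ^ m := by
    rw [neg_one_smul ℂ (w C ^ m), sub_eq_add_neg (t C ^ m) (w C ^ m)]
  rw [hsub]
  exact le_antisymm (powSumSpan_le_adjoin hab habz) (adjoin_le_powSumSpan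
    (commute_z_t.pow_right m) ((commute_z_w.pow_right m).smul_right _) hab habz)

theorem adjoin_le_adjoin_z_w_t (m : ℕ) :
    Algebra.adjoin ℂ {z C, t C ^ m - w C ^ m} ≤ Algebra.adjoin ℂ {z C, w C, t C} := by
  have hmem : ∀ y ∈ ({z C, w C, t C} : Set (A C)), y ∈ Algebra.adjoin ℂ {z C, w C, t C} :=
    fun y hy => Algebra.subset_adjoin hy
  refine Algebra.adjoin_le ?_
  rintro _ (rfl | rfl)
  · exact hmem _ (by simp)
  · exact sub_mem (pow_mem (hmem _ (by simp)) m) (pow_mem (hmem _ (by simp)) m)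

theorem fixedPoints_eq_adjoin {m : ℕ} (hm : m ≠ 0) (hC : C ≠ 0) {ζ : ℂ}
    (hζ : IsPrimitiveRoot ζ (2 * m)) {τ : A C →ₐ[ℂ] A C} (hτu : τ (u C) = -u C)
    (hτv : τ (v C) = -v C) {Sp Sm : A C →ₗ[ℂ] A C}
    (hSp : IsTwistedSwap (z C) (w C) (t C) ζ⁻¹ Sp)
    (hSm : IsTwistedSwap (z C) (w C) (t C) ζ Sm) :
    {F | τ F = F ∧ Sp F = F ∧ Sm F = F} =
      (Algebra.adjoin ℂ {z C, t C ^ m - w C ^ m} : Set (A C)) := by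
  have hSp' := hSp.pow m
  have hSm' := hSm.pow m
  rw [hζ.inv.pow_eq_neg_one hm] at hSp'
  rw [hζ.pow_eq_neg_one hm] at hSm'
  ext F
  rw [SetLike.mem_coe, ← Subalgebra.mem_toSubmodule, ← powSumSpan_eq_adjoin hC m]
  constructor
  · rintro ⟨hτF, hSpF, hSmF⟩
    have hE := mem_evenSpan_of_apply_eq_self hτu hτv hC hτF
    have hEm := hSp.mem_span_zMonomial_pow hm hζ hSm hE (by rw [hSmF, hSpF])
    exact hSp'.mem_powSumSpan_of_apply_eq_self hEm hSpF
  · intro hF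
    refine ⟨?_, hSp'.apply_eq_self_of_mem_powSumSpan hF,
      hSm'.apply_eq_self_of_mem_powSumSpan hF⟩
    rw [powSumSpan_eq_adjoin hC m, Subalgebra.mem_toSubmodule] at hF
    exact adjoin_z_w_t_le_equalizer hτu hτv (adjoin_le_adjoin_z_w_t m hF)

theorem u_pow_mul_vu_pow (p q : ℕ) : u C ^ (2 * p) * (v C * u C) ^ q = z C ^ p * w C ^ q := by
  rw [pow_mul]
  rfl

theorem u_pow_mul_vu_pow_mul_v (p q : ℕ) (hq : 1 ≤ q) :
    u C ^ (2 * p + 1) * (v C * u C) ^ (q - 1) * v C = z C ^ p * t C ^ q := by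
  obtain ⟨n, rfl⟩ := Nat.exists_eq_add_of_le' hq
  have h : SemiconjBy (u C) ((v C * u C) ^ n) ((u C * v C) ^ n) :=
    SemiconjBy.pow_right (mul_assoc _ _ _).symm n
  calc u C ^ (2 * p + 1) * (v C * u C) ^ (n + 1 - 1) * v C
      = u C ^ (2 * p) * (u C * (v C * u C) ^ n * v C) := by
        rw [Nat.add_sub_cancel, pow_succ, mul_assoc, mul_assoc, mul_assoc]
    _ = z C ^ p * t C ^ (n + 1) := by
        rw [h.eq, mul_assoc, ← pow_succ, pow_mul]
        rfl

theorem isTwistedSwap_of {c : ℂ} {S : A C →ₗ[ℂ] A C}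
    (h1 : ∀ p q : ℕ, 1 ≤ q → S (u C ^ (2 * p) * (v C * u C) ^ q) =
      c ^ q • (u C ^ (2 * p + 1) * (v C * u C) ^ (q - 1) * v C))
    (h2 : ∀ p q : ℕ, 1 ≤ q → S (u C ^ (2 * p + 1) * (v C * u C) ^ (q - 1) * v C) =
      (c ^ q)⁻¹ • (u C ^ (2 * p) * (v C * u C) ^ q))
    (h3 : ∀ p : ℕ, S (u C ^ (2 * p)) = u C ^ (2 * p)) :
    IsTwistedSwap (z C) (w C) (t C) c S := by
  intro p q
  rcases Nat.eq_zero_or_pos q with rfl | hq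
  · have h := h3 p
    rw [pow_mul] at h
    simpa [z] using h
  · have e1 := h1 p q hq
    have e2 := h2 p q hq
    rw [u_pow_mul_vu_pow, u_pow_mul_vu_pow_mul_v p q hq] at e1 e2
    exact ⟨e1, e2⟩

end Stmt15

open Stmt15 in
theorem stmt_15_general (m : ℕ) (hm : 2 ≤ m) (lam : ℂ)
    (hlam : lam = Complex.exp (Real.pi * Complex.I / m))
    (i : ℕ) (hcop : Nat.gcd i (2 * m) = 1)
    (C : ℂ) (hC : C = lam ^ i)
    (τ : A C →ₐ[ℂ] A C) (hτu : τ (u C) = -u C) (hτv : τ (v C) = -v C)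
    (Sp Sm : A C →ₗ[ℂ] A C)
    (hSp1 : ∀ p q : ℕ, 1 ≤ q →
      Sp (u C ^ (2 * p) * (v C * u C) ^ q) =
        lam ^ (-((i * q : ℕ) : ℤ)) • (u C ^ (2 * p + 1) * (v C * u C) ^ (q - 1) * v C))
    (hSp2 : ∀ p q : ℕ, 1 ≤ q →
      Sp (u C ^ (2 * p + 1) * (v C * u C) ^ (q - 1) * v C) =
        lam ^ (i * q) • (u C ^ (2 * p) * (v C * u C) ^ q))
    (hSp3 : ∀ p : ℕ, Sp (u C ^ (2 * p)) = u C ^ (2 * p))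
    (hSm1 : ∀ p q : ℕ, 1 ≤ q →
      Sm (u C ^ (2 * p) * (v C * u C) ^ q) =
        lam ^ (i * q) • (u C ^ (2 * p + 1) * (v C * u C) ^ (q - 1) * v C))
    (hSm2 : ∀ p q : ℕ, 1 ≤ q →
      Sm (u C ^ (2 * p + 1) * (v C * u C) ^ (q - 1) * v C) =
        lam ^ (-((i * q : ℕ) : ℤ)) • (u C ^ (2 * p) * (v C * u C) ^ q))
    (hSm3 : ∀ p : ℕ, Sm (u C ^ (2 * p)) = u C ^ (2 * p)) :
    {F : A C | τ F = F ∧ Sp F = F ∧ Sm F = F} =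
      (Algebra.adjoin ℂ
        ({u C ^ 2, (u C * v C) ^ m - (v C * u C) ^ m} : Set (A C)) : Set (A C)) := by
  have hm0 : m ≠ 0 := by omega
  have hlamPrim : IsPrimitiveRoot lam (2 * m) := by
    rw [hlam]
    convert Complex.isPrimitiveRoot_exp (2 * m) (by omega) using 2
    push_cast
    field_simp
  have hζ : IsPrimitiveRoot (lam ^ i) (2 * m) := hlamPrim.pow_of_coprime i hcop
  have hSp : IsTwistedSwap (z C) (w C) (t C) (lam ^ i)⁻¹ Sp :=
    isTwistedSwap_of
      (fun p q hq => by rw [hSp1 p q hq, zpow_neg, zpow_natCast, pow_mul, inv_pow])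
      (fun p q hq => by rw [hSp2 p q hq, inv_pow, inv_inv, pow_mul]) hSp3
  have hSm : IsTwistedSwap (z C) (w C) (t C) (lam ^ i) Sm :=
    isTwistedSwap_of (fun p q hq => by rw [hSm1 p q hq, pow_mul])
      (fun p q hq => by rw [hSm2 p q hq, zpow_neg, zpow_natCast, pow_mul]) hSm3
  exact fixedPoints_eq_adjoin hm0 (hC ▸ hζ.ne_zero (by omega)) hζ hτu hτv hSp hSm

open Stmt15 in
theorem stmt_15 (m : ℕ) (hm : 2 ≤ m) (lam : ℂ)
    (hlam : lam = Complex.exp (Real.pi * Complex.I / m))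
    (i : ℕ) (hipos : 1 ≤ i) (hcop : Nat.gcd i (2 * m) = 1)
    (C : ℂ) (hC : C = lam ^ i)
    (τ : A C →ₐ[ℂ] A C) (hτu : τ (u C) = -u C) (hτv : τ (v C) = -v C)
    (Sp Sm : A C →ₗ[ℂ] A C)
    (hSp1 : ∀ p q : ℕ, 1 ≤ q →
      Sp (u C ^ (2 * p) * (v C * u C) ^ q) =
        lam ^ (-((i * q : ℕ) : ℤ)) • (u C ^ (2 * p + 1) * (v C * u C) ^ (q - 1) * v C))
    (hSp2 : ∀ p q : ℕ, 1 ≤ q →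
      Sp (u C ^ (2 * p + 1) * (v C * u C) ^ (q - 1) * v C) =
        lam ^ (i * q) • (u C ^ (2 * p) * (v C * u C) ^ q))
    (hSp3 : ∀ p : ℕ, Sp (u C ^ (2 * p)) = u C ^ (2 * p))
    (hSm1 : ∀ p q : ℕ, 1 ≤ q →
      Sm (u C ^ (2 * p) * (v C * u C) ^ q) =
        lam ^ (i * q) • (u C ^ (2 * p + 1) * (v C * u C) ^ (q - 1) * v C))
    (hSm2 : ∀ p q : ℕ, 1 ≤ q →
      Sm (u C ^ (2 * p + 1) * (v C * u C) ^ (q - 1) * v C) =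
        lam ^ (-((i * q : ℕ) : ℤ)) • (u C ^ (2 * p) * (v C * u C) ^ q))
    (hSm3 : ∀ p : ℕ, Sm (u C ^ (2 * p)) = u C ^ (2 * p)) :
    {F : A C | τ F = F ∧ Sp F = F ∧ Sm F = F} =
      (Algebra.adjoin ℂ
        ({u C ^ 2, (u C * v C) ^ m - (v C * u C) ^ m} : Set (A C)) : Set (A C)) :=
  stmt_15_general m hm lam hlam i hcop C hC τ hτu hτv Sp Sm hSp1 hSp2 hSp3 hSm1 hSm2 hSm3

end
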